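/- Let G be a cut group and N a normal subgroup of G. Then G/N is a cut group. -/

import Mathlib

/-- A group is *cut* if every generator of `⟨g⟩` is conjugate to `g` or to `g⁻¹`. -/
def IsCutGroup (G : Type*) [Group G] : Prop :=
  ∀ g x : G, Subgroup.zpowers x = Subgroup.zpowers g → (IsConj x g ∨ IsConj x g⁻¹)

/-! A generator of `⟨f g⟩` is `(f g) ^ m` with `m` coprime to the order of `f g`. That order
divides the order of `g`, so `m` lifts to a unit `k` modulo the order of `g`; then `g ^ k` generates
`⟨g⟩` and maps to the given generator, and the conjugacy given by the cut property of `G` maps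
along `f`. -/

open Subgroup

theorem Subgroup.zpowers_pow_eq_zpowers_iff {G : Type*} [Group G] {g : G} {k : ℕ} :
    zpowers (g ^ k) = zpowers g ↔ k.Coprime (orderOf g) := by
  rw [Nat.coprime_iff_gcd_eq_one, ← mem_zpowers_pow_iff, le_antisymm_iff,
    and_iff_right (zpowers_le.mpr (npow_mem_zpowers g k)), zpowers_le]

theorem Nat.exists_coprime_modEq_of_dvd {d n m : ℕ} [NeZero n] (hdn : d ∣ n)
    (hm : m.Coprime d) : ∃ k, k.Coprime n ∧ k ≡ m [MOD d] := by
  obtain ⟨u, hu⟩ := ZMod.unitsMap_surjective hdn (ZMod.unitOfCoprime m hm)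
  refine ⟨(u : ZMod n).val, ZMod.val_coe_unit_coprime u, ?_⟩
  rw [← ZMod.natCast_eq_natCast_iff, ← ZMod.coe_unitOfCoprime m hm, ← hu, ZMod.unitsMap_val,
    ZMod.cast_eq_val]

theorem exists_pow_generator_map_eq {G H : Type*} [Group G] [Group H] (f : G →* H) {g : G}
    (hg : IsOfFinOrder g) {x : H} (hx : zpowers x = zpowers (f g)) :
    ∃ k : ℕ, zpowers (g ^ k) = zpowers g ∧ f (g ^ k) = x := by
  obtain ⟨m, rfl⟩ : ∃ m : ℕ, f g ^ m = x :=
    (f.isOfFinOrder hg).mem_powers_iff_mem_zpowers.mpr (hx ▸ mem_zpowers x)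
  have : NeZero (orderOf g) := ⟨hg.orderOf_pos.ne'⟩
  obtain ⟨k, hk, hkm⟩ := Nat.exists_coprime_modEq_of_dvd (orderOf_map_dvd f g)
    (zpowers_pow_eq_zpowers_iff.mp hx)
  exact ⟨k, zpowers_pow_eq_zpowers_iff.mpr hk, by rwa [map_pow, pow_eq_pow_iff_modEq]⟩

theorem IsCutGroup.of_surjective {G H : Type*} [Group G] [Group H] (hG : IsCutGroup G)
    (htors : IsMulTorsion G) (f : G →* H) (hf : Function.Surjective f) : IsCutGroup H := by
  intro h x hx
  obtain ⟨g, rfl⟩ := hf h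
  obtain ⟨k, hk, rfl⟩ := exists_pow_generator_map_eq f (htors g) hx
  rw [← map_inv]
  exact (hG g (g ^ k) hk).imp f.map_isConj f.map_isConj

/-- A quotient of a cut group is cut. -/
theorem quotient_of_cut_is_cut (G : Type*) [Group G] [Finite G]
    (hcut : IsCutGroup G) (N : Subgroup G) (hN : N.Normal) :
    IsCutGroup (G ⧸ N) :=
  hcut.of_surjective isMulTorsion_of_finite (QuotientGroup.mk' N) (QuotientGroup.mk'_surjective N)
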